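/- Let S be a nonempty finite set, let w : S → ℝ satisfy w(e) > 0 for every e ∈ S, and for α ∈ ℝ define g(α) := (Σ_{e∈S} w(e)^α · log w(e)) / (Σ_{e∈S} w(e)^α). Then g is monotone nondecreasing on ℝ: for all α₁ ≤ α₂, g(α₁) ≤ g(α₂). -/

import Mathlib

/-! Write `w ^ α₂ = w ^ α₁ * w ^ (α₂ - α₁)`. Since `w ^ (α₂ - α₁)` and `log w` are both nondecreasing
functions of `w`, Chebyshev's sum inequality for the nonnegative weights `w ^ α₁` gives
`(∑ w^α₁ log w) (∑ w^α₂) ≤ (∑ w^α₁) (∑ w^α₂ log w)`, which is the claim after clearing denominators. -/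

open Finset

theorem MonovaryOn.weighted_sum_mul_sum_le_sum_mul_sum {ι R : Type*} [CommRing R] [LinearOrder R]
    [IsStrictOrderedRing R] {s : Finset ι} {u f g : ι → R} (hu : ∀ i ∈ s, 0 ≤ u i)
    (hfg : MonovaryOn f g s) :
    (∑ i ∈ s, u i * f i) * ∑ i ∈ s, u i * g i ≤ (∑ i ∈ s, u i) * ∑ i ∈ s, u i * (f i * g i) := by
  have expand : ∑ i ∈ s, ∑ j ∈ s, u i * u j * ((f j - f i) * (g j - g i)) =
      2 * ((∑ i ∈ s, u i) * ∑ i ∈ s, u i * (f i * g i)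
        - (∑ i ∈ s, u i * f i) * ∑ i ∈ s, u i * g i) := by
    calc _ = ∑ i ∈ s, ∑ j ∈ s, (u i * (u j * (f j * g j)) + u j * (u i * (f i * g i))
          - (u i * g i * (u j * f j) + u i * f i * (u j * g j))) :=
          sum_congr rfl fun i _ ↦ sum_congr rfl fun j _ ↦ by ring
      _ = _ := by
        simp only [sum_add_distrib, sum_sub_distrib, ← mul_sum, ← sum_mul]
        ring
  have nonneg : 0 ≤ ∑ i ∈ s, ∑ j ∈ s, u i * u j * ((f j - f i) * (g j - g i)) :=
    sum_nonneg fun i hi ↦ sum_nonneg fun j hj ↦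
      mul_nonneg (mul_nonneg (hu i hi) (hu j hj)) (hfg.sub_mul_sub_nonneg hi hj)
  linarith

lemma monovaryOn_rpow_log {ι : Type*} {s : Set ι} {w : ι → ℝ} (hw : ∀ i ∈ s, 0 < w i) {β : ℝ}
    (hβ : 0 ≤ β) : MonovaryOn (fun i ↦ w i ^ β) (fun i ↦ Real.log (w i)) s :=
  fun _ hi _ hj hlog ↦
    Real.rpow_le_rpow (hw _ hi).le ((Real.log_lt_log_iff (hw _ hi) (hw _ hj)).1 hlog).le hβ

theorem weighted_log_avg_monotone {ι : Type*} (S : Finset ι) (hS : S.Nonempty)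
    (w : ι → ℝ) (hw : ∀ e ∈ S, 0 < w e) :
    ∀ α₁ α₂ : ℝ, α₁ ≤ α₂ →
      (∑ e ∈ S, w e ^ α₁ * Real.log (w e)) / (∑ e ∈ S, w e ^ α₁) ≤
        (∑ e ∈ S, w e ^ α₂ * Real.log (w e)) / (∑ e ∈ S, w e ^ α₂) := by
  intro α₁ α₂ hα
  have hsum_pos (α : ℝ) : 0 < ∑ e ∈ S, w e ^ α :=
    sum_pos (fun e he ↦ Real.rpow_pos_of_pos (hw e he) α) hS
  have hsplit : ∀ e ∈ S, w e ^ α₂ = w e ^ α₁ * w e ^ (α₂ - α₁) := fun e he ↦ by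
    rw [← Real.rpow_add (hw e he), add_sub_cancel]
  have hsplit_log : ∀ e ∈ S, w e ^ α₂ * Real.log (w e) =
      w e ^ α₁ * (w e ^ (α₂ - α₁) * Real.log (w e)) := fun e he ↦ by
    rw [hsplit e he, mul_assoc]
  have chebyshev := MonovaryOn.weighted_sum_mul_sum_le_sum_mul_sum
    (fun e he ↦ (Real.rpow_pos_of_pos (hw e he) α₁).le)
    (monovaryOn_rpow_log (s := ↑S) (fun e he ↦ hw e he) (sub_nonneg.2 hα))
  rw [← sum_congr rfl hsplit, ← sum_congr rfl hsplit_log] at chebyshev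
  rw [div_le_div_iff₀ (hsum_pos α₁) (hsum_pos α₂)]
  linarith
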